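/- There exists a compact subset K of the plane such that the Assouad dimension of the visible part Visᵉ K equals 2 for almost every direction e ∈ S¹. Concretely, K = A × A with A = {0} ∪ {S_n⁻¹}, S_n the n-th harmonic number, works: Visᵉ K = K off a countable set of directions and dim_A K = 2. -/

import Mathlib

open Real MeasureTheory

/-- The `n`-th harmonic number. -/
noncomputable def harm (n : ℕ) : ℝ := ∑ k ∈ Finset.Icc 1 n, (1 : ℝ) / k

/-- `A = {0} ∪ {S_n⁻¹ : n ≥ 1}`. -/
noncomputable def harmSet : Set ℝ := {0} ∪ {x : ℝ | ∃ n : ℕ, 1 ≤ n ∧ x = (harm n)⁻¹}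

/-- The visible part of `K` in direction `e`. -/
def visiblePart (K : Set (ℝ × ℝ)) (e : ℝ × ℝ) : Set (ℝ × ℝ) :=
  {x | {y : ℝ × ℝ | ∃ t : ℝ, 0 ≤ t ∧ y = x + t • e} ∩ K = {x}}

/-- The Assouad dimension of a set `X` in a metric space: the infimum of exponents `s`
for which there is a constant `C` such that every ball `B(x, R) ∩ X` can be covered by
at most `C (R/r)^s` balls of radius `r`, for all `0 < r < R`. -/
noncomputable def assouadDim {α : Type*} [PseudoMetricSpace α] (X : Set α) : ℝ :=
  sInf {s : ℝ | ∃ C : ℝ, 0 < C ∧ ∀ x ∈ X, ∀ r R : ℝ, 0 < r → r < R →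
    ∃ F : Finset α, (X ∩ Metric.ball x R ⊆ ⋃ y ∈ F, Metric.ball y r) ∧
      (F.card : ℝ) ≤ C * (R / r) ^ s}

/-!
`A = {0} ∪ {1/S_n}` is a sequence together with its limit, so `K = A × A` is compact and
countable. A point `x` of `K` is hidden in direction `e` only by another point `y` of `K` on the
ray from `x`, so `e` is the unit vector along `y - x`. Off these countably many directions
`Visᵉ K = K`, in particular for almost every angle.

Every planar set has Assouad dimension at most `2`: the square grid of mesh `r` meets a ball of
radius `R` in `O((R/r)²)` cells. Conversely, the points `1/S_i` with `n ≤ i ≤ 2n` lie within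
`1/S_n²` of `1/S_n` and are pairwise at least `1/(2n S_{2n}²)` apart. Since `S_{2n} ≤ 2 S_n`,
their `(n+1)²` products are a packing of a ball of `K` at scale ratio `R/r ≤ 32 n`, which rules
out every exponent `s < 2`.
-/

open Filter Set Metric
open scoped Finset

lemma harm_eq_harmonic (n : ℕ) : harm n = harmonic n := by
  simp [harm, harmonic_eq_sum_Icc]

lemma harm_succ (n : ℕ) : harm (n + 1) = harm n + ((n : ℝ) + 1)⁻¹ := by
  simp [harm_eq_harmonic, harmonic_succ]

lemma harm_strictMono : StrictMono harm :=
  strictMono_nat_of_lt_succ fun n => by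
    rw [harm_succ]
    linarith [inv_pos.2 (n.cast_add_one_pos (α := ℝ))]

lemma one_le_harm {n : ℕ} (hn : 1 ≤ n) : 1 ≤ harm n := by
  simpa [harm_succ, show harm 0 = 0 by simp [harm]] using harm_strictMono.monotone hn

lemma harm_pos {n : ℕ} (hn : 1 ≤ n) : 0 < harm n := one_pos.trans_le (one_le_harm hn)

lemma harm_two_mul_le (n : ℕ) : harm (2 * n) ≤ harm n + 1 := by
  -- `Finset.Icc 1 n` is `Finset.Ioc 0 n` by definition
  have hsplit : harm (2 * n) = harm n + ∑ k ∈ Finset.Ioc n (2 * n), (1 : ℝ) / k :=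
    (Finset.sum_Ioc_consecutive (fun k : ℕ => (1 : ℝ) / k) n.zero_le (by omega : n ≤ 2 * n)).symm
  have htail : ∑ k ∈ Finset.Ioc n (2 * n), (1 : ℝ) / k ≤ 1 := by
    rcases n.eq_zero_or_pos with rfl | hn
    · simp
    calc ∑ k ∈ Finset.Ioc n (2 * n), (1 : ℝ) / k ≤ (Finset.Ioc n (2 * n)).card • (1 / (n : ℝ)) :=
          Finset.sum_le_card_nsmul _ _ _ fun k hk => by
            gcongr
            exact (Finset.mem_Ioc.1 hk).1.le
      _ = 1 := by simp [two_mul]; field_simp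
  linarith

lemma tendsto_harm_atTop : Tendsto harm atTop atTop := by
  refine tendsto_atTop_mono (fun n => (harm_eq_harmonic n).symm ▸ log_add_one_le_harmonic n) ?_
  exact Real.tendsto_log_atTop.comp (tendsto_natCast_atTop_atTop.comp (tendsto_add_atTop_nat 1))

lemma harmSet_eq_insert_range : harmSet = insert 0 (range fun m : ℕ => (harm (m + 1))⁻¹) := by
  ext x
  simp only [harmSet, singleton_union, mem_insert_iff, mem_range]
  refine or_congr_right ⟨?_, ?_⟩
  · rintro ⟨n, hn, rfl⟩
    exact ⟨n - 1, by rw [Nat.sub_add_cancel hn]⟩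
  · rintro ⟨m, rfl⟩
    exact ⟨m + 1, Nat.le_add_left 1 m, rfl⟩

lemma isCompact_harmSet : IsCompact harmSet := by
  rw [harmSet_eq_insert_range]
  exact (tendsto_harm_atTop.comp (tendsto_add_atTop_nat 1)).inv_tendsto_atTop
    |>.isCompact_insert_range

lemma countable_harmSet : harmSet.Countable := by
  rw [harmSet_eq_insert_range]
  exact (countable_range _).insert 0

lemma inv_harm_sub_inv_harm_le {n m : ℕ} (hn : 1 ≤ n) (hnm : n ≤ m) (hm : m ≤ 2 * n) :
    (harm n)⁻¹ - (harm m)⁻¹ ≤ (harm n ^ 2)⁻¹ := by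
  have hpos := harm_pos hn
  have hmono : harm n ≤ harm m := harm_strictMono.monotone hnm
  have hgap : harm m - harm n ≤ 1 := by
    linarith [harm_two_mul_le n, harm_strictMono.monotone hm]
  rw [inv_sub_inv hpos.ne' (hpos.trans_le hmono).ne', sq, ← one_div]
  exact div_le_div₀ zero_le_one hgap (by positivity) (by gcongr)

lemma inv_harm_sub_inv_harm_succ {i : ℕ} (hi : 1 ≤ i) :
    (harm i)⁻¹ - (harm (i + 1))⁻¹ = ((i + 1) * harm i * harm (i + 1))⁻¹ := by
  have := harm_pos hi
  have := harm_pos (hi.trans i.le_succ)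
  rw [inv_sub_inv (by positivity) (by positivity), harm_succ]
  field_simp
  ring

lemma inv_le_inv_harm_sub_inv_harm {n i j : ℕ} (hn : 1 ≤ n) (hni : n ≤ i) (hij : i < j)
    (hj : j ≤ 2 * n) : (2 * n * harm (2 * n) ^ 2)⁻¹ ≤ (harm i)⁻¹ - (harm j)⁻¹ := by
  have hi : 1 ≤ i := hn.trans hni
  have hmono := harm_strictMono.monotone
  calc (2 * n * harm (2 * n) ^ 2)⁻¹ ≤ ((i + 1) * harm i * harm (i + 1))⁻¹ := by
        have := harm_pos hi
        have := harm_pos (n := i + 1) (by omega)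
        have := harm_pos (n := 2 * n) (by omega)
        refine inv_anti₀ (by positivity) ?_
        calc (i + 1) * harm i * harm (i + 1) ≤ 2 * n * harm (2 * n) * harm (2 * n) := by
              gcongr
              · exact_mod_cast (by omega : i + 1 ≤ 2 * n)
              · exact hmono (by omega)
              · exact hmono (by omega)
          _ = 2 * n * harm (2 * n) ^ 2 := by ring
    _ = (harm i)⁻¹ - (harm (i + 1))⁻¹ := (inv_harm_sub_inv_harm_succ hi).symm
    _ ≤ (harm i)⁻¹ - (harm j)⁻¹ := by
        gcongr
        · exact harm_pos (hi.trans i.le_succ)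
        · exact hmono hij

lemma exists_harmSet_packing {n : ℕ} (hn : 1 ≤ n) :
    ∃ P : Finset ℝ, (P : Set ℝ) ⊆ harmSet ∩ ball (harm n)⁻¹ (2 / harm n ^ 2) ∧
      (P : Set ℝ).Pairwise (fun a b => (2 * n * harm (2 * n) ^ 2)⁻¹ ≤ dist a b) ∧ #P = n + 1 := by
  refine ⟨(Finset.Icc n (2 * n)).image fun i => (harm i)⁻¹, ?_, ?_, ?_⟩
  · rw [Finset.coe_image, Finset.coe_Icc]
    rintro _ ⟨i, ⟨hni, hi2n⟩, rfl⟩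
    refine ⟨Or.inr ⟨i, hn.trans hni, rfl⟩, ?_⟩
    have hle := inv_harm_sub_inv_harm_le hn hni hi2n
    have := harm_pos hn
    have hmono : (harm i)⁻¹ ≤ (harm n)⁻¹ := inv_anti₀ this (harm_strictMono.monotone hni)
    rw [mem_ball, Real.dist_eq, abs_sub_comm, abs_of_nonneg (sub_nonneg.2 hmono)]
    calc _ ≤ (harm n ^ 2)⁻¹ := hle
      _ < 2 / harm n ^ 2 := by rw [inv_eq_one_div]; gcongr; norm_num
  · rw [Finset.coe_image, Finset.coe_Icc]
    rintro _ ⟨i, ⟨hni, hi2n⟩, rfl⟩ _ ⟨j, ⟨hnj, hj2n⟩, rfl⟩ hne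
    rw [Real.dist_eq]
    rcases lt_or_gt_of_ne (ne_of_apply_ne (fun i => (harm i)⁻¹) hne) with hij | hji
    · exact (inv_le_inv_harm_sub_inv_harm hn hni hij hj2n).trans (le_abs_self _)
    · rw [abs_sub_comm]
      exact (inv_le_inv_harm_sub_inv_harm hn hnj hji hi2n).trans (le_abs_self _)
  · rw [Finset.card_image_of_injective _ fun i j h => harm_strictMono.injective (inv_injective h),
      Nat.card_Icc]
    omega

lemma visiblePart_subset (K : Set (ℝ × ℝ)) (e : ℝ × ℝ) : visiblePart K e ⊆ K := fun x hx =>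
  (hx.symm ▸ mem_singleton x : x ∈ {y : ℝ × ℝ | ∃ t : ℝ, 0 ≤ t ∧ y = x + t • e} ∩ K).2

lemma exists_pos_smul_of_notMem_visiblePart {K : Set (ℝ × ℝ)} {e x : ℝ × ℝ} (hx : x ∈ K)
    (hxe : x ∉ visiblePart K e) : ∃ y ∈ K, ∃ t : ℝ, 0 < t ∧ y - x = t • e := by
  have hxray : x ∈ {y : ℝ × ℝ | ∃ t : ℝ, 0 ≤ t ∧ y = x + t • e} ∩ K := ⟨⟨0, le_rfl, by simp⟩, hx⟩
  obtain ⟨y, ⟨⟨t, ht, rfl⟩, hy⟩, hyx⟩ :=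
    not_subset.1 fun h => hxe (h.antisymm (singleton_subset_iff.2 hxray))
  refine ⟨_, hy, t, ht.lt_of_ne ?_, add_sub_cancel_left x _⟩
  rintro rfl
  simp at hyx

lemma subsingleton_unit_pos_smul_eq (v : ℝ × ℝ) :
    {e : ℝ × ℝ | e.1 ^ 2 + e.2 ^ 2 = 1 ∧ ∃ t : ℝ, 0 < t ∧ v = t • e}.Subsingleton := by
  rintro e ⟨he, t, ht, rfl⟩ e' ⟨he', t', ht', hv⟩
  have h1 : t * e.1 = t' * e'.1 := congrArg Prod.fst hv
  have h2 : t * e.2 = t' * e'.2 := congrArg Prod.snd hv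
  have htt' : t = t' := by
    -- both sides are `v.1 ^ 2 + v.2 ^ 2`
    have : t ^ 2 = t' ^ 2 := by
      linear_combination (t * e.1 + t' * e'.1) * h1 + (t * e.2 + t' * e'.2) * h2
        - t ^ 2 * he + t' ^ 2 * he'
    exact (pow_left_inj₀ ht.le ht'.le two_ne_zero).1 this
  subst htt'
  exact smul_right_injective _ ht.ne' hv

lemma countable_setOf_visiblePart_ne {K : Set (ℝ × ℝ)} (hK : K.Countable) :
    {e : ℝ × ℝ | e.1 ^ 2 + e.2 ^ 2 = 1 ∧ visiblePart K e ≠ K}.Countable := by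
  refine ((hK.prod hK).biUnion fun p _ =>
    (subsingleton_unit_pos_smul_eq (p.2 - p.1)).countable).mono ?_
  rintro e ⟨he, hne⟩
  obtain ⟨x, hx, hxe⟩ := not_subset.1 fun h => hne ((visiblePart_subset K e).antisymm h)
  obtain ⟨y, hy, t, ht, hyx⟩ := exists_pos_smul_of_notMem_visiblePart hx hxe
  exact mem_biUnion (x := (x, y)) ⟨hx, hy⟩ ⟨he, t, ht, hyx⟩

lemma countable_setOf_cos_sin_eq (e : ℝ × ℝ) :
    {θ : ℝ | (Real.cos θ, Real.sin θ) = e}.Countable := by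
  rcases eq_empty_or_nonempty {θ : ℝ | (Real.cos θ, Real.sin θ) = e} with h | ⟨θ₀, rfl⟩
  · exact h ▸ countable_empty
  refine (countable_range fun k : ℤ => θ₀ + k * (2 * π)).mono fun θ hθ => ?_
  obtain ⟨hcos, hsin⟩ := Prod.mk.inj hθ
  have : Real.cos (θ - θ₀) = 1 := by
    rw [Real.cos_sub, hcos, hsin]
    linear_combination Real.cos_sq_add_sin_sq θ₀
  obtain ⟨k, hk⟩ := (Real.cos_eq_one_iff _).1 this
  exact ⟨k, by linarith⟩

lemma countable_setOf_cos_sin_mem {S : Set (ℝ × ℝ)} (hS : S.Countable) :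
    {θ : ℝ | (Real.cos θ, Real.sin θ) ∈ S}.Countable :=
  (hS.biUnion fun e _ => countable_setOf_cos_sin_eq e).mono fun θ (hθ : _ ∈ S) =>
    mem_biUnion hθ (rfl : θ ∈ {θ : ℝ | (Real.cos θ, Real.sin θ) = _})

section Assouad

variable {α β : Type*} [PseudoMetricSpace α] [PseudoMetricSpace β]

def IsAssouadExponent (X : Set α) (s : ℝ) : Prop :=
  ∃ C : ℝ, 0 < C ∧ ∀ x ∈ X, ∀ r R : ℝ, 0 < r → r < R →
    ∃ F : Finset α, (X ∩ ball x R ⊆ ⋃ y ∈ F, ball y r) ∧ (#F : ℝ) ≤ C * (R / r) ^ s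

lemma assouadDim_eq_of_isLeast {X : Set α} {d : ℝ} (h : IsLeast {s | IsAssouadExponent X s} d) :
    assouadDim X = d :=
  h.csInf_eq

lemma IsAssouadExponent.mono {X Y : Set α} {s : ℝ} (hY : IsAssouadExponent Y s) (hXY : X ⊆ Y) :
    IsAssouadExponent X s := by
  obtain ⟨C, hC, hcov⟩ := hY
  refine ⟨C, hC, fun x hx r R hr hrR => ?_⟩
  obtain ⟨F, hF, hcard⟩ := hcov x (hXY hx) r R hr hrR
  exact ⟨F, (inter_subset_inter_left _ hXY).trans hF, hcard⟩

lemma IsAssouadExponent.prod {X : Set α} {Y : Set β} {s t : ℝ} (hX : IsAssouadExponent X s)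
    (hY : IsAssouadExponent Y t) : IsAssouadExponent (X ×ˢ Y) (s + t) := by
  classical
  obtain ⟨C, hC, hcovX⟩ := hX
  obtain ⟨D, hD, hcovY⟩ := hY
  refine ⟨C * D, mul_pos hC hD, fun x hx r R hr hrR => ?_⟩
  obtain ⟨F, hF, hFcard⟩ := hcovX x.1 hx.1 r R hr hrR
  obtain ⟨G, hG, hGcard⟩ := hcovY x.2 hx.2 r R hr hrR
  refine ⟨F ×ˢ G, fun p ⟨hpXY, hpx⟩ => ?_, ?_⟩
  · rw [← ball_prod_same] at hpx
    obtain ⟨y, hy, hpy⟩ := mem_iUnion₂.1 (hF ⟨hpXY.1, hpx.1⟩)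
    obtain ⟨z, hz, hpz⟩ := mem_iUnion₂.1 (hG ⟨hpXY.2, hpx.2⟩)
    exact mem_iUnion₂.2 ⟨(y, z), Finset.mem_product.2 ⟨hy, hz⟩, ball_prod_same y z r ▸ ⟨hpy, hpz⟩⟩
  · have hRr : 0 < R / r := div_pos (hr.trans hrR) hr
    rw [Finset.card_product, Nat.cast_mul, Real.rpow_add hRr, mul_mul_mul_comm]
    exact mul_le_mul hFcard hGcard (Nat.cast_nonneg _) (by positivity)

lemma isAssouadExponent_univ_real : IsAssouadExponent (univ : Set ℝ) 1 := by
  refine ⟨3, three_pos, fun x _ r R hr hrR => ?_⟩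
  set N := ⌈2 * R / r⌉₊
  refine ⟨(Finset.range N).image fun k : ℕ => x - R + r * k, fun y ⟨_, hy⟩ => ?_, ?_⟩
  · rw [Real.ball_eq_Ioo, mem_Ioo] at hy
    set k := ⌊(y - (x - R)) / r⌋₊
    have hk : (k : ℝ) ≤ (y - (x - R)) / r := Nat.floor_le (div_nonneg (by linarith) hr.le)
    have hk' : (y - (x - R)) / r < k + 1 := Nat.lt_floor_add_one _
    refine mem_iUnion₂.2 ⟨x - R + r * k, Finset.mem_image_of_mem _ (Finset.mem_range.2 ?_), ?_⟩
    · have hy2R : (y - (x - R)) / r < 2 * R / r := by gcongr; linarith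
      exact Nat.cast_lt.1 (hk.trans_lt (hy2R.trans_le (Nat.le_ceil _)))
    · rw [le_div_iff₀ hr] at hk
      rw [div_lt_iff₀ hr] at hk'
      rw [Real.ball_eq_Ioo, mem_Ioo]
      constructor <;> linarith
  · have hRr : 1 < R / r := (one_lt_div hr).2 hrR
    calc (#((Finset.range N).image fun k : ℕ => x - R + r * k) : ℝ) ≤ N := by
          exact_mod_cast Finset.card_image_le.trans (Finset.card_range N).le
      _ ≤ 2 * R / r + 1 := (Nat.ceil_lt_add_one (div_nonneg (by linarith) hr.le)).le
      _ ≤ 3 * (R / r) ^ (1 : ℝ) := by rw [Real.rpow_one, mul_div_assoc]; linarith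

lemma isAssouadExponent_two (X : Set (ℝ × ℝ)) : IsAssouadExponent X 2 := by
  have h := isAssouadExponent_univ_real.prod isAssouadExponent_univ_real
  rw [univ_prod_univ, one_add_one_eq_two] at h
  exact h.mono (subset_univ X)

lemma Finset.card_le_card_of_subset_iUnion_ball {P F : Finset α} {r : ℝ}
    (hP : (P : Set α).Pairwise fun p q => 2 * r ≤ dist p q)
    (hPF : (P : Set α) ⊆ ⋃ y ∈ F, ball y r) : #P ≤ #F := by
  refine Finset.card_le_card_of_forall_subsingleton (fun p y => p ∈ ball y r)
    (fun p hp => by simpa using hPF hp) fun y _ p ⟨hp, hpy⟩ q ⟨hq, hqy⟩ => ?_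
  by_contra hpq
  have := dist_triangle_right p q y
  linarith [hP hp hq hpq, mem_ball.1 hpy, mem_ball.1 hqy]

lemma IsAssouadExponent.le_of_packing {X : Set α} {s d c : ℝ} (hs : IsAssouadExponent X s)
    (hd : 0 < d) (hc : 0 < c)
    (hpack : ∀ᶠ n : ℕ in atTop, ∃ x ∈ X, ∃ r R : ℝ, 0 < r ∧ r < R ∧ R / r ≤ c * n ∧
      ∃ P : Finset α, (P : Set α) ⊆ X ∩ ball x R ∧
        (P : Set α).Pairwise (fun p q => 2 * r ≤ dist p q) ∧ (n : ℝ) ^ d ≤ #P) :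
    d ≤ s := by
  obtain ⟨C, hC, hcov⟩ := hs
  by_contra! hsd
  -- a nonnegative exponent, so that `R / r ≤ c * n` bounds `(R / r) ^ t`
  set t := max s 0
  have htd : t < d := max_lt hsd hd
  have hgrowth : Tendsto (fun n : ℕ => (n : ℝ) ^ (d - t)) atTop atTop :=
    (tendsto_rpow_atTop (sub_pos.2 htd)).comp tendsto_natCast_atTop_atTop
  obtain ⟨n, ⟨x, hx, r, R, hr, hrR, hRr, P, hPX, hPsep, hPcard⟩, hn, hn1⟩ :=
    (hpack.and ((hgrowth.eventually_gt_atTop (C * c ^ t)).and (eventually_ge_atTop 1))).exists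
  obtain ⟨F, hF, hFcard⟩ := hcov x hx r R hr hrR
  have hn0 : (0 : ℝ) < n := by exact_mod_cast hn1
  have hRr1 : 1 ≤ R / r := (one_le_div hr).2 hrR.le
  have hPF : #P ≤ #F := Finset.card_le_card_of_subset_iUnion_ball hPsep (hPX.trans hF)
  have : (n : ℝ) ^ d < n ^ d := calc
    (n : ℝ) ^ d ≤ #F := hPcard.trans (by exact_mod_cast hPF)
    _ ≤ C * (R / r) ^ s := hFcard
    _ ≤ C * (R / r) ^ t := by gcongr; exact le_max_left s 0
    _ ≤ C * (c * n) ^ t := by gcongr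
    _ = C * c ^ t * n ^ t := by rw [Real.mul_rpow hc.le hn0.le, mul_assoc]
    _ < n ^ (d - t) * n ^ t := by gcongr
    _ = n ^ d := by rw [← Real.rpow_add hn0, sub_add_cancel]
  exact this.false

lemma Set.Pairwise.prod_le_dist {P : Set α} {Q : Set β} {δ : ℝ}
    (hP : P.Pairwise fun p q => δ ≤ dist p q) (hQ : Q.Pairwise fun p q => δ ≤ dist p q) :
    (P ×ˢ Q).Pairwise fun p q => δ ≤ dist p q := by
  rintro ⟨a, b⟩ ⟨ha, hb⟩ ⟨a', b'⟩ ⟨ha', hb'⟩ hne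
  rw [Prod.dist_eq]
  by_cases haa' : a = a'
  · subst haa'
    exact le_max_of_le_right (hQ hb hb' fun hbb' => hne (congrArg (Prod.mk a) hbb'))
  · exact le_max_of_le_left (hP ha ha' haa')

end Assouad

lemma assouadDim_harmSet_prod : assouadDim (harmSet ×ˢ harmSet) = 2 := by
  refine assouadDim_eq_of_isLeast ⟨isAssouadExponent_two _, fun s hs =>
    hs.le_of_packing two_pos (c := 32) (by norm_num) ?_⟩
  filter_upwards [eventually_ge_atTop 1] with n hn
  obtain ⟨P, hPA, hPsep, hPcard⟩ := exists_harmSet_packing hn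
  have hS := harm_pos hn
  have hSH : harm n ≤ harm (2 * n) := harm_strictMono.monotone (by omega)
  have hH : 0 < harm (2 * n) := hS.trans_le hSH
  have hHS : harm (2 * n) ^ 2 ≤ 4 * harm n ^ 2 := by
    nlinarith [harm_two_mul_le n, one_le_harm hn]
  have hn1 : (1 : ℝ) ≤ n := by exact_mod_cast hn
  have hA : (harm n)⁻¹ ∈ harmSet := Or.inr ⟨n, hn, rfl⟩
  -- `2 r` is the gap of the packing and `R` exceeds its spread
  refine ⟨((harm n)⁻¹, (harm n)⁻¹), ⟨hA, hA⟩, (4 * n * harm (2 * n) ^ 2)⁻¹, 2 / harm n ^ 2,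
    by positivity, ?_, ?_, P ×ˢ P, ?_, ?_, ?_⟩
  · rw [inv_eq_one_div, div_lt_div_iff₀ (by positivity) (by positivity)]
    nlinarith
  · rw [div_inv_eq_mul, div_mul_eq_mul_div, div_le_iff₀ (by positivity)]
    nlinarith [mul_le_mul_of_nonneg_left hHS (Nat.cast_nonneg (α := ℝ) n)]
  · rw [Finset.coe_product, ← ball_prod_same, prod_inter_prod]
    exact prod_mono hPA hPA
  · rw [Finset.coe_product]
    refine (hPsep.prod_le_dist hPsep).mono' fun a b h => le_of_eq_of_le ?_ h
    field_simp
    ring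
  · rw [Finset.card_product, hPcard, Real.rpow_two]
    push_cast
    nlinarith

/-- There is a compact planar set whose visible part has Assouad dimension `2` in almost
every direction: `K = A × A` works, since `Visᵉ K = K` off a countable set of directions
and `dim_A K = 2`. -/
theorem exists_compact_visiblePart_assouad_two :
    ∃ K : Set (ℝ × ℝ), K = harmSet ×ˢ harmSet ∧ IsCompact K ∧
      {e : ℝ × ℝ | e.1 ^ 2 + e.2 ^ 2 = 1 ∧ visiblePart K e ≠ K}.Countable ∧
      assouadDim K = 2 ∧
      ∀ᵐ θ : ℝ, assouadDim (visiblePart K (Real.cos θ, Real.sin θ)) = 2 := by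
  have hbad := countable_setOf_visiblePart_ne (countable_harmSet.prod countable_harmSet)
  refine ⟨_, rfl, isCompact_harmSet.prod isCompact_harmSet, hbad, assouadDim_harmSet_prod, ?_⟩
  filter_upwards [(countable_setOf_cos_sin_mem hbad).ae_notMem volume] with θ hθ
  rw [not_not.1 fun hne => hθ ⟨Real.cos_sq_add_sin_sq θ, hne⟩, assouadDim_harmSet_prod]
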